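/- There exist a set A contained in the open unit disc U = {(x,y) ∈ ℝ² : x² + y² < 1} and disjoint sets F, G ⊆ [0, π) with [0, π) = F ∪ G such that F and G are both Bernstein sets in [0, π), for every α ∈ F the projection π_α[A] = {x·cos α + y·sin α : (x,y) ∈ A} equals the open interval (-1, 1), and for every α ∈ G the projection π_α[A] is a Bernstein set in (-1, 1). -/

import Mathlib

/-- A perfect set: nonempty, closed, with no isolated points. -/
def PerfectSet {X : Type*} [TopologicalSpace X] (P : Set X) : Prop :=
  Perfect P ∧ P.Nonempty

/-- A Bernstein set in a topological space: it meets, and its complement meets,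
every perfect subset of the space. -/
def IsBernstein {X : Type*} [TopologicalSpace X] (A : Set X) : Prop :=
  ∀ P : Set X, PerfectSet P → (A ∩ P).Nonempty ∧ (P \ A).Nonempty

/-- `A` is a Bernstein set in the subspace `Y` (with the subspace topology). -/
def IsBernsteinIn {X : Type*} [TopologicalSpace X] (Y A : Set X) : Prop :=
  IsBernstein {y : Y | (y : X) ∈ A}

/-- The signed orthogonal projection onto the line through the origin in
direction `(cos α, sin α)`. -/
noncomputable def proj (α : ℝ) (p : ℝ × ℝ) : ℝ :=
  p.1 * Real.cos α + p.2 * Real.sin α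

/-!
Split `[0, π)` into complementary Bernstein sets `F`, `G` by the classical transfinite
construction: a second countable space has at most `𝔠` perfect subsets, and here each of them
has `𝔠` points, so along a well-order of type `𝔠` one can put a fresh point of each perfect set
into `F` and another one into `G`.

The set `A` is built by a second recursion of length `𝔠`, through the tasks
`(α, t) ∈ F × (-1, 1)`, "put a point of the disc on the line `proj α = t`", and
`(α, P) ∈ G × {perfect subsets of (-1, 1)}`, "put a point of the disc with `α`-projection in `P`,
and reserve a value `s ∈ P` that `proj α` must never take on `A`". Fewer than `𝔠` points and
reserved lines exist at any stage, and two distinct lines meet in at most one point, so each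
choice avoids fewer than `𝔠` bad values among `𝔠` candidates; the directions of `F` and `G`
are disjoint, so the `F`-tasks never collide with a reserved line.
-/

open Set Cardinal Function TopologicalSpace Real

universe u

section Cardinal

variable {α : Type u}

theorem mk_union_lt_continuum {s t : Set α} (hs : #s < 𝔠) (ht : #t < 𝔠) : #(s ∪ t : Set α) < 𝔠 :=
  (mk_union_le s t).trans_lt (add_lt_of_lt aleph0_le_continuum hs ht)

theorem mk_insert_lt_continuum {s : Set α} (a : α) (hs : #s < 𝔠) : #(insert a s : Set α) < 𝔠 := by
  rw [insert_eq]
  exact mk_union_lt_continuum (by simpa using nat_lt_continuum 1) hs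

theorem exists_mem_notMem_of_mk_lt_continuum {s t : Set α} (hs : 𝔠 ≤ #s) (ht : #t < 𝔠) :
    ∃ x ∈ s, x ∉ t :=
  sdiff_nonempty_of_mk_lt_mk (ht.trans_le hs)

end Cardinal

theorem exists_transfinite_choice {T X : Type u} [Nonempty T] (hT : #T ≤ 𝔠)
    (R : T → Set X → X → Prop) (hR : ∀ τ (S : Set X), #S < 𝔠 → ∃ x, R τ S x) :
    ∃ (task : (𝔠 : Cardinal.{u}).ord.ToType → T) (f : (𝔠 : Cardinal.{u}).ord.ToType → X),
      Surjective task ∧ ∀ i, R (task i) (f '' Iio i) (f i) := by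
  obtain ⟨e⟩ : Nonempty (T ↪ (𝔠 : Cardinal.{u}).ord.ToType) := by rwa [← le_def, mk_ord_toType]
  have : Nonempty X := (hR (Classical.arbitrary T) ∅ (by simp [continuum_pos])).nonempty
  let f := WellFoundedLT.fix fun i prev =>
    Classical.epsilon (R (invFun e i) (range fun j : Iio i => prev j j.2))
  refine ⟨invFun e, f, invFun_surjective e.injective, fun i => ?_⟩
  have hfi : f i = Classical.epsilon (R (invFun e i) (f '' Iio i)) := by
    simp only [f]
    rw [WellFoundedLT.fix_eq, image_eq_range]
  rw [hfi]
  exact Classical.epsilon_spec (hR _ _ (mk_image_le.trans_lt (by simpa using mk_Iio_lt i)))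

section TopologicalSpace

variable {X : Type u} [TopologicalSpace X]

theorem mk_setOf_isClosed_le_continuum [SecondCountableTopology X] :
    #{C : Set X // IsClosed C} ≤ 𝔠 := by
  have hcompl (C : {C : Set X // IsClosed C}) :
      (C : Set X)ᶜ = ⋃ s ∈ {s : countableBasis X | (s : Set X) ⊆ (C : Set X)ᶜ}, (s : Set X) := by
    refine Subset.antisymm (fun x hx => ?_) (iUnion₂_subset fun s hs => hs)
    obtain ⟨s, hsB, hxs, hsC⟩ :=
      (isBasis_countableBasis X).exists_subset_of_mem_open hx C.2.isOpen_compl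
    exact mem_biUnion (x := ⟨s, hsB⟩) hsC hxs
  have hinj : Injective fun C : {C : Set X // IsClosed C} =>
      {s : countableBasis X | (s : Set X) ⊆ (C : Set X)ᶜ} := by
    intro C D h
    refine Subtype.ext (compl_injective ?_)
    rw [hcompl C, hcompl D]
    exact congrArg (fun S : Set (countableBasis X) => ⋃ s ∈ S, (s : Set X)) h
  calc #{C : Set X // IsClosed C} ≤ #(Set (countableBasis X)) := mk_le_of_injective hinj
    _ = 2 ^ #(countableBasis X) := mk_set
    _ ≤ 2 ^ ℵ₀ := power_le_power_left two_ne_zero (countable_countableBasis X).le_aleph0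
    _ = 𝔠 := two_power_aleph0

theorem mk_setOf_perfectSet_le_continuum [SecondCountableTopology X] :
    #{P : Set X // PerfectSet P} ≤ 𝔠 :=
  (mk_subtype_mono fun _ hP => hP.1.closed).trans mk_setOf_isClosed_le_continuum

theorem Preperfect.image {Y : Type*} [TopologicalSpace Y] {P : Set X} (hP : Preperfect P)
    {f : X → Y} (hf : Continuous f) (hinj : Injective f) : Preperfect (f '' P) := by
  rw [preperfect_iff_nhds] at hP ⊢
  rintro _ ⟨x, hxP, rfl⟩ U hU
  obtain ⟨y, ⟨hyU, hyP⟩, hyx⟩ := hP x hxP _ (hf.continuousAt.preimage_mem_nhds hU)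
  exact ⟨f y, ⟨hyU, mem_image_of_mem f hyP⟩, hinj.ne hyx⟩

theorem IsBernstein.compl {B : Set X} (hB : IsBernstein B) : IsBernstein Bᶜ := by
  intro P hP
  obtain ⟨hin, hout⟩ := hB P hP
  exact ⟨by rwa [inter_comm, ← sdiff_eq], by rwa [sdiff_compl, inter_comm]⟩

theorem exists_isBernstein [SecondCountableTopology X] (hP : ∀ P : Set X, PerfectSet P → 𝔠 ≤ #P) :
    ∃ B : Set X, IsBernstein B := by
  rcases isEmpty_or_nonempty {P : Set X // PerfectSet P} with hT | hT
  · exact ⟨∅, fun P hP => (IsEmpty.false (⟨P, hP⟩ : {P : Set X // PerfectSet P})).elim⟩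
  let used (S : Set (X × X)) : Set X := Prod.fst '' S ∪ Prod.snd '' S
  have hstep (P : {P : Set X // PerfectSet P}) (S : Set (X × X)) (hS : #S < 𝔠) :
      ∃ ab : X × X, ab.1 ∈ P.1 ∧ ab.2 ∈ P.1 ∧ ab.1 ≠ ab.2 ∧ ab.1 ∉ used S ∧ ab.2 ∉ used S := by
    have hused : #(used S) < 𝔠 :=
      mk_union_lt_continuum (mk_image_le.trans_lt hS) (mk_image_le.trans_lt hS)
    obtain ⟨a, haP, haS⟩ := exists_mem_notMem_of_mk_lt_continuum (hP _ P.2) hused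
    obtain ⟨b, hbP, hb⟩ :=
      exists_mem_notMem_of_mk_lt_continuum (hP _ P.2) (mk_insert_lt_continuum a hused)
    refine ⟨(a, b), haP, hbP, ?_, haS, fun h => hb (mem_insert_of_mem a h)⟩
    exact fun hab : a = b => hb (hab ▸ mem_insert a _)
  obtain ⟨task, f, hsurj, hf⟩ := exists_transfinite_choice mk_setOf_perfectSet_le_continuum _ hstep
  refine ⟨range (Prod.fst ∘ f), fun P hP => ?_⟩
  obtain ⟨i, hi⟩ := hsurj ⟨P, hP⟩
  obtain ⟨ha, hb, hab, -, hbS⟩ := hi ▸ hf i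
  refine ⟨⟨(f i).1, mem_range_self i, ha⟩, (f i).2, hb, ?_⟩
  rintro ⟨j, hj⟩
  rcases lt_trichotomy j i with hji | rfl | hij
  · exact hbS (Or.inl ⟨f j, mem_image_of_mem f hji, hj⟩)
  · exact hab hj
  · exact (hf j).2.2.2.1 (Or.inr ⟨f i, mem_image_of_mem f hij, hj.symm⟩)

end TopologicalSpace

section MetricSpace

variable {X : Type u} [MetricSpace X] [CompleteSpace X]

theorem Perfect.continuum_le_mk {C : Set X} (hC : Perfect C) (hne : C.Nonempty) : 𝔠 ≤ #C := by
  obtain ⟨f, hfC, -, hf⟩ := hC.exists_nat_bool_injection hne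
  simpa using lift_mk_le_lift_mk_of_injective (f := fun x => (⟨f x, hfC (mem_range_self x)⟩ : C))
    fun a b h => hf (congrArg Subtype.val h)

theorem PerfectSet.continuum_le_mk_of_countable_closure_sdiff_self {Y : Set X}
    (hY : (closure Y \ Y).Countable) {P : Set Y} (hP : PerfectSet P) : 𝔠 ≤ #P := by
  set Q : Set X := Subtype.val '' P
  have hQ : 𝔠 ≤ #(closure Q) := (hP.1.acc.image continuous_subtype_val Subtype.val_injective
    ).perfect_closure.continuum_le_mk ((hP.2.image _).mono subset_closure)
  have hsub : closure Q ⊆ Q ∪ (closure Y \ Y) := by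
    intro x hx
    by_cases hxY : x ∈ Y
    · left
      have : (⟨x, hxY⟩ : Y) ∈ closure P := closure_subtype.mpr hx
      exact ⟨_, hP.1.closed.closure_eq ▸ this, rfl⟩
    · exact Or.inr ⟨closure_mono (image_subset_range _ _ |>.trans Subtype.range_val.subset) hx, hxY⟩
  rw [← mk_image_eq Subtype.val_injective]
  by_contra! hlt
  exact (mk_union_lt_continuum hlt (mk_le_aleph0_iff.mpr hY.to_subtype |>.trans_lt
    aleph0_lt_continuum)).not_ge (hQ.trans (mk_le_mk_of_subset hsub))

theorem exists_isBernsteinIn_partition [SecondCountableTopology X] {Y : Set X}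
    (hY : (closure Y \ Y).Countable) :
    ∃ F G : Set X, Disjoint F G ∧ F ∪ G = Y ∧ IsBernsteinIn Y F ∧ IsBernsteinIn Y G := by
  obtain ⟨B, hB⟩ :=
    exists_isBernstein fun P hP => hP.continuum_le_mk_of_countable_closure_sdiff_self hY
  refine ⟨Subtype.val '' B, Y \ Subtype.val '' B, disjoint_sdiff_right,
    union_sdiff_cancel (image_subset_range _ _ |>.trans Subtype.range_val.subset), ?_, ?_⟩
  · show IsBernstein (Subtype.val ⁻¹' (Subtype.val '' B))
    rwa [preimage_image_eq _ Subtype.val_injective]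
  · show IsBernstein {y : Y | (y : X) ∈ Y \ Subtype.val '' B}
    convert hB.compl using 2
    ext y
    simp

end MetricSpace

theorem countable_closure_Ioo_sdiff_self (a b : ℝ) : (closure (Ioo a b) \ Ioo a b).Countable := by
  rcases lt_or_ge a b with hab | hab
  · rw [closure_Ioo hab.ne, Icc_sdiff_Ioo_same hab.le]
    exact (countable_singleton b).insert a
  · simp [Ioo_eq_empty (not_lt.mpr hab)]

theorem countable_closure_Ico_sdiff_self (a b : ℝ) : (closure (Ico a b) \ Ico a b).Countable := by
  rcases lt_or_ge a b with hab | hab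
  · rw [closure_Ico hab.ne, Icc_sdiff_Ico_same hab.le]
    exact countable_singleton b
  · simp [Ico_eq_empty (not_lt.mpr hab)]

def unitDisc : Set (ℝ × ℝ) := {p | p.1 ^ 2 + p.2 ^ 2 < 1}

/-- The rotation of `(t, u)` by `α`: the point of the line `proj α = t` at signed distance `u`
from its foot. -/
noncomputable def linePoint (α t u : ℝ) : ℝ × ℝ := (t * cos α - u * sin α, t * sin α + u * cos α)

theorem proj_linePoint (α β t u : ℝ) :
    proj β (linePoint α t u) = t * cos (α - β) + u * sin (β - α) := by
  simp only [proj, linePoint, cos_sub, sin_sub]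
  ring

theorem linePoint_mem_unitDisc {α t u : ℝ} (h : t ^ 2 + u ^ 2 < 1) :
    linePoint α t u ∈ unitDisc := by
  have hsc := sin_sq_add_cos_sq α
  simp only [unitDisc, linePoint, mem_ofPred_eq]
  linear_combination h + (t ^ 2 + u ^ 2) * hsc

theorem proj_mem_Ioo_of_mem_unitDisc (α : ℝ) {p : ℝ × ℝ} (hp : p ∈ unitDisc) :
    proj α p ∈ Ioo (-1 : ℝ) 1 := by
  have hsq : proj α p ^ 2 < 1 := by
    have hsc := sin_sq_add_cos_sq α
    have hCS : proj α p ^ 2 + (p.1 * sin α - p.2 * cos α) ^ 2 = p.1 ^ 2 + p.2 ^ 2 := by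
      simp only [proj]
      linear_combination (p.1 ^ 2 + p.2 ^ 2) * hsc
    have hp' : p.1 ^ 2 + p.2 ^ 2 < 1 := hp
    linarith [sq_nonneg (p.1 * sin α - p.2 * cos α)]
  exact abs_lt.mp ((sq_lt_one_iff_abs_lt_one _).mp hsq)

theorem sin_sub_ne_zero_of_mem_Ico {α β : ℝ} (hα : α ∈ Ico 0 π) (hβ : β ∈ Ico 0 π)
    (hne : β ≠ α) : sin (β - α) ≠ 0 := by
  rw [Ne, sin_eq_zero_iff_of_lt_of_lt (by linarith [hα.2, hβ.1]) (by linarith [hα.1, hβ.2]),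
    sub_eq_zero]
  exact hne

theorem exists_mem_unitDisc_proj_eq_avoiding {α t : ℝ} (hα : α ∈ Ico 0 π)
    (ht : t ∈ Ioo (-1 : ℝ) 1) {L : Set (ℝ × ℝ)} (hL : #L < 𝔠) (hLdir : ∀ ℓ ∈ L, ℓ.1 ∈ Ico 0 π)
    (hαt : (α, t) ∉ L) : ∃ p ∈ unitDisc, proj α p = t ∧ ∀ ℓ ∈ L, proj ℓ.1 p ≠ ℓ.2 := by
  have ht' : |t| < 1 := abs_lt.mpr ht
  -- a line `(β, s) ≠ (α, t)` meets `linePoint α t` at most at the parameter listed in `bad`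
  set bad : Set ℝ := (fun ℓ : ℝ × ℝ => (ℓ.2 - t * cos (α - ℓ.1)) / sin (ℓ.1 - α)) '' L
  obtain ⟨u, hu, hubad⟩ := exists_mem_notMem_of_mk_lt_continuum
    (mk_Ioo_real (sub_pos.mpr ht')).ge (mk_image_le.trans_lt hL : #bad < 𝔠)
  refine ⟨linePoint α t u, linePoint_mem_unitDisc ?_, by simp [proj_linePoint], ?_⟩
  · nlinarith [hu.1, hu.2, abs_nonneg t, sq_abs t]
  · rintro ⟨β, s⟩ hβs hproj
    rw [proj_linePoint] at hproj
    by_cases hβα : β = α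
    · subst hβα
      obtain rfl : t = s := by simpa using hproj
      exact hαt hβs
    · refine hubad ⟨(β, s), hβs, ?_⟩
      field_simp [sin_sub_ne_zero_of_mem_Ico hα (hLdir _ hβs) hβα]
      linarith

section Projections

variable {F G : Set ℝ}

def ProjectionTask (F G : Set ℝ) : Type :=
  (F × Ioo (-1 : ℝ) 1) ⊕ (G × {P : Set (Ioo (-1 : ℝ) 1) // PerfectSet P})

theorem mk_projectionTask_le_continuum : #(ProjectionTask F G) ≤ 𝔠 := by
  have hℝ {s : Set ℝ} : #s ≤ 𝔠 := mk_real ▸ mk_set_le s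
  simp only [ProjectionTask, mk_sum, mk_prod, lift_id]
  calc #F * #(Ioo (-1 : ℝ) 1) + #G * #{P : Set (Ioo (-1 : ℝ) 1) // PerfectSet P}
      ≤ 𝔠 * 𝔠 + 𝔠 * 𝔠 := by gcongr <;> first | exact hℝ | exact mk_setOf_perfectSet_le_continuum
    _ = 𝔠 := by rw [continuum_mul_self, continuum_add_self]

/-- A stage of the construction of `A` outputs a point `p` of `A` together with a line
`ℓ = (β, s)`, standing for `{q | proj β q = s}`; the lines with `β ∈ G` are kept off by every
later point. -/
def forbiddenLines (G : Set ℝ) (S : Set ((ℝ × ℝ) × (ℝ × ℝ))) : Set (ℝ × ℝ) :=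
  {ℓ ∈ Prod.snd '' S | ℓ.1 ∈ G}

def ServesTask : ProjectionTask F G → Set ((ℝ × ℝ) × (ℝ × ℝ)) → (ℝ × ℝ) × (ℝ × ℝ) → Prop
  | .inl (α, t), _, (p, _) => proj α p = t
  | .inr (α, P), S, (p, ℓ) => proj α p ∈ Subtype.val '' P.1 ∧ ℓ.1 = α ∧
      ℓ.2 ∈ Subtype.val '' P.1 ∧ ∀ q ∈ insert p (Prod.fst '' S), proj α q ≠ ℓ.2

theorem exists_mem_unitDisc_avoiding_servesTask (hF : F ⊆ Ico 0 π) (hG : G ⊆ Ico 0 π)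
    (hFG : Disjoint F G) (τ : ProjectionTask F G) (S : Set ((ℝ × ℝ) × (ℝ × ℝ))) (hS : #S < 𝔠) :
    ∃ x : (ℝ × ℝ) × (ℝ × ℝ), x.1 ∈ unitDisc ∧ (∀ ℓ ∈ forbiddenLines G S, proj ℓ.1 x.1 ≠ ℓ.2) ∧
      ServesTask τ S x := by
  have hL : #(forbiddenLines G S) < 𝔠 :=
    (mk_le_mk_of_subset (sep_subset _ _)).trans_lt (mk_image_le.trans_lt hS)
  have hLdir : ∀ ℓ ∈ forbiddenLines G S, ℓ.1 ∈ Ico 0 π := fun ℓ hℓ => hG hℓ.2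
  rcases τ with ⟨⟨α, hα⟩, ⟨t, ht⟩⟩ | ⟨⟨α, hα⟩, ⟨P, hP⟩⟩
  · obtain ⟨p, hp, hpt, hpL⟩ := exists_mem_unitDisc_proj_eq_avoiding (hF hα) ht hL hLdir
      fun h => hFG.notMem_of_mem_left hα h.2
    exact ⟨(p, (α, t)), hp, hpL, hpt⟩
  · have hPc : 𝔠 ≤ #(Subtype.val '' P) := (mk_image_eq Subtype.val_injective).symm ▸
      hP.continuum_le_mk_of_countable_closure_sdiff_self (countable_closure_Ioo_sdiff_self _ _)
    obtain ⟨t, htP, htL⟩ := exists_mem_notMem_of_mk_lt_continuum hPc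
      ((mk_preimage_of_injective _ _ (Prod.mk_right_injective α)).trans_lt hL)
    obtain ⟨p, hp, hpt, hpL⟩ := exists_mem_unitDisc_proj_eq_avoiding (hG hα)
      (image_subset_range _ _ |>.trans Subtype.range_val.subset htP) hL hLdir htL
    obtain ⟨s, hsP, hs⟩ := exists_mem_notMem_of_mk_lt_continuum hPc
      (mk_image_le.trans_lt (mk_insert_lt_continuum p (mk_image_le.trans_lt hS)))
    exact ⟨(p, (α, s)), hp, hpL, hpt ▸ htP, rfl, hsP, fun q hq hqs => hs ⟨q, hq, hqs⟩⟩

theorem exists_subset_unitDisc_proj_image (hF : F ⊆ Ico 0 π) (hG : G ⊆ Ico 0 π)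
    (hFG : Disjoint F G) :
    ∃ A ⊆ unitDisc, (∀ α ∈ F, proj α '' A = Ioo (-1 : ℝ) 1) ∧
      ∀ α ∈ G, IsBernsteinIn (Ioo (-1 : ℝ) 1) (proj α '' A) := by
  rcases isEmpty_or_nonempty (ProjectionTask F G) with hT | hT
  · exact ⟨∅, empty_subset _, fun α hα => (hT.false (.inl (⟨α, hα⟩, ⟨0, by norm_num⟩))).elim,
      fun α hα P hP => (hT.false (.inr (⟨α, hα⟩, ⟨P, hP⟩))).elim⟩
  obtain ⟨task, f, hsurj, hf⟩ := exists_transfinite_choice mk_projectionTask_le_continuum _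
    (exists_mem_unitDisc_avoiding_servesTask hF hG hFG)
  refine ⟨range (Prod.fst ∘ f), range_subset_iff.mpr fun i => (hf i).1, fun α hα => ?_,
    fun α hα P hP => ?_⟩
  · refine Subset.antisymm ?_ fun t ht => ?_
    · rintro _ ⟨_, ⟨i, rfl⟩, rfl⟩
      exact proj_mem_Ioo_of_mem_unitDisc α (hf i).1
    · obtain ⟨i, hi⟩ := hsurj (.inl (⟨α, hα⟩, ⟨t, ht⟩))
      have hserve := (hf i).2.2
      rw [hi] at hserve
      exact ⟨(f i).1, mem_range_self i, hserve⟩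
  · obtain ⟨i, hi⟩ := hsurj (.inr (⟨α, hα⟩, ⟨P, hP⟩))
    have hserve := (hf i).2.2
    rw [hi] at hserve
    obtain ⟨⟨y, hyP, hy⟩, hℓα, ⟨z, hzP, hz⟩, hmiss⟩ := hserve
    refine ⟨⟨y, ⟨(f i).1, mem_range_self i, hy.symm⟩, hyP⟩, z, hzP, ?_⟩
    rintro ⟨_, ⟨j, rfl⟩, hj⟩
    rw [hz] at hj
    rcases lt_trichotomy j i with hji | rfl | hij
    · exact hmiss _ (mem_insert_of_mem _ ⟨f j, mem_image_of_mem f hji, rfl⟩) hj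
    · exact hmiss _ (mem_insert _ _) hj
    · exact (hf j).2.1 (f i).2 ⟨⟨f i, mem_image_of_mem f hij, rfl⟩, hℓα ▸ hα⟩ (hℓα ▸ hj)

end Projections

theorem stmt12 :
    ∃ (A : Set (ℝ × ℝ)) (F G : Set ℝ),
      A ⊆ {p : ℝ × ℝ | p.1 ^ 2 + p.2 ^ 2 < 1} ∧
      Disjoint F G ∧ F ∪ G = Set.Ico 0 Real.pi ∧
      IsBernsteinIn (Set.Ico 0 Real.pi) F ∧ IsBernsteinIn (Set.Ico 0 Real.pi) G ∧
      (∀ α ∈ F, proj α '' A = Set.Ioo (-1 : ℝ) 1) ∧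
      (∀ α ∈ G, IsBernsteinIn (Set.Ioo (-1 : ℝ) 1) (proj α '' A)) := by
  obtain ⟨F, G, hFG, hcover, hFB, hGB⟩ :=
    exists_isBernsteinIn_partition (countable_closure_Ico_sdiff_self 0 π)
  obtain ⟨A, hA, hFA, hGA⟩ := exists_subset_unitDisc_proj_image (hcover ▸ subset_union_left)
    (hcover ▸ subset_union_right) hFG
  exact ⟨A, F, G, hA, hFG, hcover, hFB, hGB, hFA, hGA⟩
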